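/- Let Ω be a locally compact Hausdorff space, Γ a nondegenerate Banach module over C₀(Ω), and K = Ω ∪ {∞} the one-point compactification of Ω. If f is a continuous 𝕜-valued function on K and g ∈ C₀(Ω) is the function given by g(x) = f(x) − f(∞) for all x ∈ Ω, then for every s ∈ Γ one has ‖g•s + f(∞)·s‖ ≤ ‖f‖_∞ · ‖s‖, where ‖f‖_∞ is the supremum norm of f on K. (Consequently the formula (f, s) ↦ g•s + f(∞)·s turns Γ into a unitary Banach module over C(K).) -/

import Mathlib

open scoped ZeroAtInfty OnePoint

noncomputable section

variable {𝕜 : Type*} [RCLike 𝕜] {Ω : Type*} [TopologicalSpace Ω]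

/-- A Banach module structure over `C₀(Ω, 𝕜)` on a `𝕜`-Banach space `Γ`. -/
structure C0Module (𝕜 : Type*) [RCLike 𝕜] (Ω : Type*) [TopologicalSpace Ω]
    (Γ : Type*) [NormedAddCommGroup Γ] [NormedSpace 𝕜 Γ] where
  smul : C₀(Ω, 𝕜) →L[𝕜] Γ →L[𝕜] Γ
  mul_smul : ∀ (f g : C₀(Ω, 𝕜)) (s : Γ), smul (f * g) s = smul f (smul g s)
  norm_smul_le : ∀ (f : C₀(Ω, 𝕜)) (s : Γ), ‖smul f s‖ ≤ ‖f‖ * ‖s‖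

variable {Γ : Type*} [NormedAddCommGroup Γ] [NormedSpace 𝕜 Γ]

/-- Nondegeneracy of a Banach module over `C₀(Ω, 𝕜)`. -/
def C0Module.Nondegenerate (M : C0Module 𝕜 Ω Γ) : Prop :=
  Dense (Submodule.span 𝕜 {x : Γ | ∃ (f : C₀(Ω, 𝕜)) (s : Γ), M.smul f s = x} : Set Γ)

/-! Compactly supported Urysohn functions `e` with `0 ≤ e ≤ 1`, indexed by the compact sets on
which they equal `1`, form a net in `C₀(Ω)` with `e * h → h` for every `h`. In a nondegenerate
module the operators `s ↦ e • s` have norm at most `1`, so `e • s → s` holds on a dense set and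
hence everywhere. Since `(g + f(∞)) * e = f * e` has sup norm at most `‖f‖`, the element
`g • (e • s) + f(∞) • (e • s) = (g * e + f(∞) • e) • s` has norm at most `‖f‖ * ‖s‖`, and so does
its limit `g • s + f(∞) • s`. -/

open Filter Topology TopologicalSpace Set

namespace ZeroAtInftyContinuousMap

theorem norm_le {h : C₀(Ω, 𝕜)} {C : ℝ} (hC : 0 ≤ C) : ‖h‖ ≤ C ↔ ∀ x, ‖h x‖ ≤ C := by
  rw [← norm_toBCF_eq_norm]
  exact BoundedContinuousFunction.norm_le hC

theorem norm_coe_le_norm (h : C₀(Ω, 𝕜)) (x : Ω) : ‖h x‖ ≤ ‖h‖ := by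
  rw [← norm_toBCF_eq_norm]
  exact h.toBCF.norm_coe_le_norm x

theorem exists_norm_le_one_eqOn_one [RegularSpace Ω] [LocallyCompactSpace Ω] {K : Set Ω}
    (hK : IsCompact K) : ∃ e : C₀(Ω, 𝕜), ‖e‖ ≤ 1 ∧ EqOn e 1 K := by
  obtain ⟨φ, hφK, -, hφ_supp, hφ_mem⟩ :=
    exists_continuous_one_zero_of_isCompact hK isClosed_empty (disjoint_empty K)
  let e : C(Ω, 𝕜) := (⟨RCLike.ofReal, RCLike.continuous_ofReal⟩ : C(ℝ, 𝕜)).comp φ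
  have he_supp : HasCompactSupport e := hφ_supp.comp_left RCLike.ofReal_zero
  refine ⟨⟨e, he_supp.is_zero_at_infty⟩, (norm_le zero_le_one).mpr fun x => ?_, fun x hx => ?_⟩
  · show ‖((φ x : ℝ) : 𝕜)‖ ≤ 1
    rw [RCLike.norm_ofReal, abs_of_nonneg (hφ_mem x).1]
    exact (hφ_mem x).2
  · show ((φ x : ℝ) : 𝕜) = 1
    simp [hφK hx]

theorem tendsto_mul_of_eqOn_one {u : Compacts Ω → C₀(Ω, 𝕜)} (hu_norm : ∀ K, ‖u K‖ ≤ 1)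
    (hu_one : ∀ K : Compacts Ω, EqOn (u K) 1 K) (h : C₀(Ω, 𝕜)) :
    Tendsto (fun K => u K * h) atTop (𝓝 h) := by
  rw [Metric.tendsto_atTop]
  intro ε hε
  have h_small : ∀ᶠ x in cocompact Ω, ‖h x‖ ≤ ε / 3 := by
    filter_upwards [Metric.tendsto_nhds.mp h.zero_at_infty' (ε / 3) (by positivity)] with x hx
    simpa using hx.le
  obtain ⟨K₀, hK₀, h_small_out⟩ := mem_cocompact'.mp h_small
  refine ⟨⟨K₀, hK₀⟩, fun K hK => ?_⟩
  have h_pointwise : ∀ x, ‖(u K * h - h) x‖ ≤ 2 * (ε / 3) := fun x => by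
    have hval : (u K * h - h) x = (u K x - 1) * h x := by simp [sub_mul]
    rw [hval, norm_mul]
    by_cases hx : x ∈ K₀
    · rw [hu_one K (hK hx), Pi.one_apply, sub_self, norm_zero, zero_mul]
      positivity
    · have hux : ‖u K x - 1‖ ≤ 2 := by
        linarith [norm_sub_le (u K x) 1, (norm_coe_le_norm (u K) x).trans (hu_norm K),
          norm_one (α := 𝕜)]
      have hhx : ‖h x‖ ≤ ε / 3 := not_not.mp fun hx' => hx (h_small_out hx')
      gcongr
  rw [dist_eq_norm]
  linarith [(norm_le (by positivity)).mpr h_pointwise]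

theorem norm_mul_add_smul_le (f : C(OnePoint Ω, 𝕜)) {g : C₀(Ω, 𝕜)}
    (hg : ∀ x : Ω, g x = f x - f ∞) (e : C₀(Ω, 𝕜)) : ‖g * e + f ∞ • e‖ ≤ ‖f‖ * ‖e‖ :=
  (norm_le (by positivity)).mpr fun x => by
    have hval : (g * e + f ∞ • e) x = f x * e x := by
      simp only [coe_add, coe_mul, coe_smul, Pi.add_apply, Pi.mul_apply, Pi.smul_apply,
        smul_eq_mul, hg x]
      ring
    rw [hval, norm_mul]
    exact mul_le_mul (f.norm_coe_le_norm x) (norm_coe_le_norm e x) (norm_nonneg _) (norm_nonneg f)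

end ZeroAtInftyContinuousMap

namespace C0Module

theorem tendsto_smul_of_tendsto_mul (M : C0Module 𝕜 Ω Γ) (hM : M.Nondegenerate) {ι : Type*}
    {l : Filter ι} {u : ι → C₀(Ω, 𝕜)} {C : ℝ} (hu_norm : ∀ i, ‖u i‖ ≤ C)
    (hu : ∀ h, Tendsto (fun i => u i * h) l (𝓝 h)) (s : Γ) :
    Tendsto (fun i => M.smul (u i) s) l (𝓝 s) := by
  have h_equi : Equicontinuous fun i => ⇑(M.smul (u i)) :=
    ((NormedSpace.equicontinuous_TFAE fun i => M.smul (u i)).out 3 1).mp <|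
      show ∃ C, ∀ i t, ‖M.smul (u i) t‖ ≤ C * ‖t‖ from
        ⟨C, fun i t => (M.norm_smul_le (u i) t).trans (by gcongr; exact hu_norm i)⟩
  let S : Set Γ := {t | Tendsto (fun i => M.smul (u i) t) l (𝓝 t)}
  have hS_closed : IsClosed S := h_equi.isClosed_setOfPred_tendsto continuous_id
  have h_gen : ∀ h t, M.smul h t ∈ S := fun h t => by
    show Tendsto (fun i => M.smul (u i) (M.smul h t)) l (𝓝 (M.smul h t))
    simp_rw [← M.mul_smul]
    exact ((M.smul.flip t).continuous.tendsto h).comp (hu h)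
  have h_span : (Submodule.span 𝕜 {x | ∃ h t, M.smul h t = x} : Set Γ) ⊆ S := fun t ht => by
    induction ht using Submodule.span_induction with
    | mem x hx => obtain ⟨h, t, rfl⟩ := hx; exact h_gen h t
    | zero => simpa [S] using tendsto_const_nhds
    | add x y _ _ hx hy => simpa [S] using hx.add hy
    | smul a x _ hx => simpa [S] using hx.const_smul a
  exact closure_minimal h_span hS_closed (hM s)

end C0Module

theorem onePoint_module_norm_le_general
    [LocallyCompactSpace Ω] [T2Space Ω]
    (M : C0Module 𝕜 Ω Γ) (hM : M.Nondegenerate)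
    (f : C(OnePoint Ω, 𝕜)) (g : C₀(Ω, 𝕜))
    (hg : ∀ x : Ω, g x = f (x : OnePoint Ω) - f ∞) (s : Γ) :
    ‖M.smul g s + f ∞ • s‖ ≤ ‖f‖ * ‖s‖ := by
  choose u hu_norm hu_one using
    fun K : Compacts Ω => ZeroAtInftyContinuousMap.exists_norm_le_one_eqOn_one (𝕜 := 𝕜) K.isCompact
  have h_lim := M.tendsto_smul_of_tendsto_mul hM hu_norm
    (ZeroAtInftyContinuousMap.tendsto_mul_of_eqOn_one hu_norm hu_one) s
  let T : Γ →L[𝕜] Γ := M.smul g + f ∞ • ContinuousLinearMap.id 𝕜 Γ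
  refine le_of_tendsto ((T.continuous.tendsto s).comp h_lim).norm (Eventually.of_forall fun K => ?_)
  calc ‖T (M.smul (u K) s)‖ = ‖M.smul (g * u K + f ∞ • u K) s‖ := by
        simp [T, M.mul_smul]
    _ ≤ ‖g * u K + f ∞ • u K‖ * ‖s‖ := M.norm_smul_le _ _
    _ ≤ ‖f‖ * ‖s‖ := by
      gcongr
      exact (ZeroAtInftyContinuousMap.norm_mul_add_smul_le f hg (u K)).trans
        (mul_le_of_le_one_right (norm_nonneg f) (hu_norm K))

/-- Extension of the module structure of a nondegenerate Banach module over
`C₀(Ω)` to the one-point compactification `K = Ω ∪ {∞}`: for a continuous function `f` on `K`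
and `g ∈ C₀(Ω)` given by `g x = f x - f ∞`, one has `‖g • s + f(∞) • s‖ ≤ ‖f‖ ⬝ ‖s‖`. -/
theorem onePoint_module_norm_le
    [LocallyCompactSpace Ω] [T2Space Ω] [CompleteSpace Γ]
    (M : C0Module 𝕜 Ω Γ) (hM : M.Nondegenerate)
    (f : C(OnePoint Ω, 𝕜)) (g : C₀(Ω, 𝕜))
    (hg : ∀ x : Ω, g x = f (x : OnePoint Ω) - f ∞) (s : Γ) :
    ‖M.smul g s + f ∞ • s‖ ≤ ‖f‖ * ‖s‖ :=
  onePoint_module_norm_le_general M hM f g hg s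

end
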